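/- The group presented with fourteen generators g_1, g_2, g_3, g_4 (standing for ze_1, ze_2, ze_3, ze_4), h_{13}, h_{14}, h_{12} (standing for ze_1e_3, ze_1e_4, ze_1e_2), h_{21}, h_{23}, h_{24} (standing for ze_2e_1, ze_2e_3, ze_2e_4), h_{31}, h_{32} (standing for ze_3e_1, ze_3e_2), h_{41}, h_{42} (standing for ze_4e_1, ze_4e_2), and relations g_1 = 1, g_3 = 1, h_{12} = 1, h_{21} = h_{13}, h_{23} = h_{14}, h_{24} = h_{12}, h_{41} = h_{31}, h_{42} = h_{32}, g_1·h_{12} = g_2·h_{21}, g_1·h_{13} = g_3·h_{31}, g_1·h_{14} = g_4·h_{41}, g_2·h_{23} = g_3·h_{32}, g_2·h_{24} = g_4·h_{42}, is isomorphic to the group with presentation ⟨a, b ∣ a·a = b·a·b⟩, via an isomorphism sending g_2 to a and g_4 to b. -/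
import Mathlib


namespace Stmt5

/-- Free group on the fourteen generators
`g₁, g₂, g₃, g₄, h₁₃, h₁₄, h₁₂, h₂₁, h₂₃, h₂₄, h₃₁, h₃₂, h₄₁, h₄₂`. -/
abbrev F14 := FreeGroup (Fin 14)

def g1 : F14 := FreeGroup.of 0   -- ze₁
def g2 : F14 := FreeGroup.of 1   -- ze₂
def g3 : F14 := FreeGroup.of 2   -- ze₃
def g4 : F14 := FreeGroup.of 3   -- ze₄
def h13 : F14 := FreeGroup.of 4  -- ze₁e₃
def h14 : F14 := FreeGroup.of 5  -- ze₁e₄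
def h12 : F14 := FreeGroup.of 6  -- ze₁e₂
def h21 : F14 := FreeGroup.of 7  -- ze₂e₁
def h23 : F14 := FreeGroup.of 8  -- ze₂e₃
def h24 : F14 := FreeGroup.of 9  -- ze₂e₄
def h31 : F14 := FreeGroup.of 10 -- ze₃e₁
def h32 : F14 := FreeGroup.of 11 -- ze₃e₂
def h41 : F14 := FreeGroup.of 12 -- ze₄e₁
def h42 : F14 := FreeGroup.of 13 -- ze₄e₂

/-- The thirteen relations of the presentation produced by the algorithm for
`(g, p) = (1, 0)`, each relation `r = s` written as the element `r·s⁻¹`. -/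
def rels14 : Set F14 :=
  {g1, g3, h12,
   h21 * h13⁻¹, h23 * h14⁻¹, h24 * h12⁻¹, h41 * h31⁻¹, h42 * h32⁻¹,
   g1 * h12 * (g2 * h21)⁻¹, g1 * h13 * (g3 * h31)⁻¹, g1 * h14 * (g4 * h41)⁻¹,
   g2 * h23 * (g3 * h32)⁻¹, g2 * h24 * (g4 * h42)⁻¹}

/-- The relation `a·a = b·a·b`, written as `a·a·(b·a·b)⁻¹`, with `a = FreeGroup.of 0`,
`b = FreeGroup.of 1`. -/
def relAB : Set (FreeGroup (Fin 2)) :=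
  {FreeGroup.of 0 * FreeGroup.of 0 *
    (FreeGroup.of 1 * FreeGroup.of 0 * FreeGroup.of 1)⁻¹}

/- ###### Auxiliary material ###### -/

abbrev P := PresentedGroup rels14
abbrev Q := PresentedGroup relAB

def a : Q := PresentedGroup.of 0
def b : Q := PresentedGroup.of 1

abbrev O (i : Fin 14) : P := PresentedGroup.of i

lemma mk_rel {α : Type*} {rels : Set (FreeGroup α)} {r : FreeGroup α} (h : r ∈ rels) :
    PresentedGroup.mk rels r = 1 :=
  (QuotientGroup.eq_one_iff r).mpr (Subgroup.subset_normalClosure h)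

lemma hab : a * a = b * a * b := by
  have h := mk_rel (rels := relAB)
    (r := FreeGroup.of 0 * FreeGroup.of 0 * (FreeGroup.of 1 * FreeGroup.of 0 * FreeGroup.of 1)⁻¹)
    (Set.mem_singleton _)
  rw [map_mul, map_inv, mul_inv_eq_one, map_mul, map_mul, map_mul] at h
  exact h

/- single-generator relations -/
lemma d0 : O 0 = 1 := mk_rel (by simp [rels14, g1])
lemma d2 : O 2 = 1 := mk_rel (by simp [rels14, g1, g3])
lemma d6 : O 6 = 1 := mk_rel (by simp [rels14, g1, g3, h12])

lemma rel_eq {x y : F14} (h : x * y⁻¹ ∈ rels14) :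
    PresentedGroup.mk rels14 x = PresentedGroup.mk rels14 y := by
  have := mk_rel h
  rw [map_mul, map_inv, mul_inv_eq_one] at this
  exact this

lemma e74 : O 7 = O 4 := rel_eq (by simp [rels14, h21, h13])
lemma e85 : O 8 = O 5 := rel_eq (by simp [rels14, h23, h14])
lemma e96 : O 9 = O 6 := rel_eq (by simp [rels14, h24, h12])
lemma e1210 : O 12 = O 10 := rel_eq (by simp [rels14, h41, h31])
lemma e1311 : O 13 = O 11 := rel_eq (by simp [rels14, h42, h32])

lemma kA : O 0 * O 6 = O 1 * O 7 := by
  have h := rel_eq (x := g1 * h12) (y := g2 * h21) (by simp [rels14])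
  rw [map_mul, map_mul] at h
  exact h

lemma kB : O 0 * O 4 = O 2 * O 10 := by
  have h := rel_eq (x := g1 * h13) (y := g3 * h31) (by simp [rels14])
  rw [map_mul, map_mul] at h
  exact h

lemma kC : O 0 * O 5 = O 3 * O 12 := by
  have h := rel_eq (x := g1 * h14) (y := g4 * h41) (by simp [rels14])
  rw [map_mul, map_mul] at h
  exact h

lemma kD : O 1 * O 8 = O 2 * O 11 := by
  have h := rel_eq (x := g2 * h23) (y := g3 * h32) (by simp [rels14])
  rw [map_mul, map_mul] at h
  exact h

lemma kE : O 1 * O 9 = O 3 * O 13 := by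
  have h := rel_eq (x := g2 * h24) (y := g4 * h42) (by simp [rels14])
  rw [map_mul, map_mul] at h
  exact h

lemma d7 : O 7 = (O 1)⁻¹ := by
  have h := kA
  rw [d0, d6, one_mul] at h
  exact eq_inv_of_mul_eq_one_right h.symm

lemma d4 : O 4 = (O 1)⁻¹ := by rw [← e74]; exact d7

lemma d10 : O 10 = (O 1)⁻¹ := by
  have h := kB
  rw [d0, d2, one_mul, one_mul] at h
  rw [← h]; exact d4

lemma d12 : O 12 = (O 1)⁻¹ := by rw [e1210]; exact d10

lemma d5 : O 5 = O 3 * (O 1)⁻¹ := by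
  have h := kC
  rw [d0, one_mul, d12] at h
  exact h

lemma d8 : O 8 = O 3 * (O 1)⁻¹ := by rw [e85]; exact d5

lemma d9 : O 9 = 1 := by rw [e96]; exact d6

lemma d11 : O 11 = O 1 * O 3 * (O 1)⁻¹ := by
  have h := kD
  rw [d2, one_mul, d8] at h
  rw [← h]; group

lemma d13 : O 13 = O 1 * O 3 * (O 1)⁻¹ := by rw [e1311]; exact d11

lemma mainRel : O 1 * O 1 = O 3 * O 1 * O 3 := by
  have h := kE
  rw [d9, mul_one, d13] at h
  calc O 1 * O 1 = (O 3 * (O 1 * O 3 * (O 1)⁻¹)) * O 1 := by rw [← h]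
    _ = O 3 * O 1 * O 3 := by group

/- The two homomorphisms -/

def fφ : Fin 14 → Q
  | 0 => 1
  | 1 => a
  | 2 => 1
  | 3 => b
  | 4 => a⁻¹
  | 5 => b * a⁻¹
  | 6 => 1
  | 7 => a⁻¹
  | 8 => b * a⁻¹
  | 9 => 1
  | 10 => a⁻¹
  | 11 => a * b * a⁻¹
  | 12 => a⁻¹
  | 13 => a * b * a⁻¹

lemma hφ : ∀ r ∈ rels14, FreeGroup.lift fφ r = 1 := by
  intro r hr
  simp only [rels14, Set.mem_insert_iff, Set.mem_singleton_iff] at hr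
  rcases hr with rfl|rfl|rfl|rfl|rfl|rfl|rfl|rfl|rfl|rfl|rfl|rfl|rfl <;>
    simp only [g1, g2, g3, g4, h12, h13, h14, h21, h23, h24, h31, h32, h41, h42,
      map_mul, map_inv, FreeGroup.lift_apply_of, fφ]
  all_goals try (group; done)
  -- remaining: the relation needing a·a = b·a·b
  rw [mul_inv_eq_one, show (a * 1 : Q) = a from mul_one a,
    show b * (a * b * a⁻¹) = b * a * b * a⁻¹ by group, ← hab]
  group

def fψ : Fin 2 → P
  | 0 => PresentedGroup.of 1
  | 1 => PresentedGroup.of 3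

lemma hψ : ∀ r ∈ relAB, FreeGroup.lift fψ r = 1 := by
  intro r hr
  rw [relAB, Set.mem_singleton_iff] at hr
  subst hr
  simp only [map_mul, map_inv, FreeGroup.lift_apply_of, fψ]
  rw [mul_inv_eq_one]
  exact mainRel

def φ : P →* Q := PresentedGroup.toGroup hφ
def ψ : Q →* P := PresentedGroup.toGroup hψ

lemma comp1 : ψ.comp φ = MonoidHom.id P := by
  ext i
  fin_cases i <;>
    simp [φ, ψ, a, b, PresentedGroup.toGroup.of, fφ, fψ, d0, d2, d4, d5, d6,
      d7, d8, d9, d10, d11, d12, d13]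

lemma comp2 : φ.comp ψ = MonoidHom.id Q := by
  ext i
  fin_cases i <;> simp [φ, ψ, PresentedGroup.toGroup.of, fφ, fψ, a, b]

/-- The presented group produced by the algorithm for `(g, p) = (1, 0)` is isomorphic
to `⟨a, b ∣ a·a = b·a·b⟩` via an isomorphism sending `g₂ = ze₂` to `a` and
`g₄ = ze₄` to `b`. -/
theorem presentation_simplifies :
    ∃ e : PresentedGroup rels14 ≃* PresentedGroup relAB,
      e (PresentedGroup.of 1) = PresentedGroup.of 0 ∧
      e (PresentedGroup.of 3) = PresentedGroup.of 1 := by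
  refine ⟨MonoidHom.toMulEquiv φ ψ comp1 comp2, ?_, ?_⟩ <;>
    simp [MonoidHom.toMulEquiv, φ, PresentedGroup.toGroup.of, fφ, a, b]

end Stmt5
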